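/- Let r ≥ 1 and let n, n_1, …, n_r be integers with n_1 ≥ n_2 ≥ … ≥ n_r ≥ 1 and n ≥ n_1 + … + n_r (this encodes 𝔥 = 𝔰𝔬_{n_1}(ℂ) ⊕ … ⊕ 𝔰𝔬_{n_r}(ℂ) block-diagonally embedded in 𝔤 = 𝔰𝔬_n(ℂ)). For tuples a^{(k)} ∈ ℝ^{⌊n_k/2⌋}, let c ∈ ℝ^{⌊n/2⌋} be the concatenation a^{(1)} ⌢ … ⌢ a^{(r)} followed by ⌊n/2⌋ − Σ_k ⌊n_k/2⌋ zeros. Then: (I) [for all such families: 2Σ_{k=1}^r ρ_{SO_{n_k}}(a^{(k)}) ≤ ρ_{SO_n}(c)] if and only if 2n_1 ≤ n + 2; (II) [for all such families with (a^{(1)}, …, a^{(r)}) ≠ 0: 2Σ_{k=1}^r ρ_{SO_{n_k}}(a^{(k)}) < ρ_{SO_n}(c)] if and only if 2n_1 ≤ n + 1. -/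

import Mathlib

open Finset

/-- `ρ_A(c) = Σ_{i<j} |c_i - c_j|`, written in the permutation-invariant
symmetric form `(1/2) Σ_{i,j} |c_i - c_j|`. -/
noncomputable def rhoA {ι : Type*} [Fintype ι] (c : ι → ℝ) : ℝ :=
  (∑ i, ∑ j, |c i - c j|) / 2

/-- `ρ_B(c) = Σ_{i<j} (|c_i - c_j| + |c_i + c_j|) + Σ_i |c_i|`, written in the
permutation-invariant symmetric form `(1/2) Σ_{i,j} (|c_i - c_j| + |c_i + c_j|)`. -/
noncomputable def rhoB {ι : Type*} [Fintype ι] (c : ι → ℝ) : ℝ :=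
  (∑ i, ∑ j, (|c i - c j| + |c i + c j|)) / 2

/-- `ρ_D(c) = Σ_{i<j} (|c_i - c_j| + |c_i + c_j|) = ρ_B(c) - Σ_i |c_i|`. -/
noncomputable def rhoD {ι : Type*} [Fintype ι] (c : ι → ℝ) : ℝ :=
  rhoB c - ∑ i, |c i|

/-- `ρ_C(c) = Σ_{i<j} (|c_i - c_j| + |c_i + c_j|) + 2 Σ_i |c_i| = ρ_B(c) + Σ_i |c_i|`. -/
noncomputable def rhoC {ι : Type*} [Fintype ι] (c : ι → ℝ) : ℝ :=
  rhoB c + ∑ i, |c i|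

/-- `ρ_{SO_n}` is `ρ_D` for even `n` and `ρ_B` for odd `n`. -/
noncomputable def rhoSO (n : ℕ) {ι : Type*} [Fintype ι] (c : ι → ℝ) : ℝ :=
  if Even n then rhoD c else rhoB c


section BKaux

lemma two_max_abs (x y : ℝ) : |x - y| + |x + y| = 2 * max |x| |y| := by
  rcases max_cases |x| |y| with ⟨h, hxy⟩ | ⟨h, hxy⟩ <;>
  rcases abs_cases x with ⟨hx, _⟩ | ⟨hx, _⟩ <;>
  rcases abs_cases y with ⟨hy, _⟩ | ⟨hy, _⟩ <;>
  rcases abs_cases (x - y) with ⟨h1, _⟩ | ⟨h1, _⟩ <;>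
  rcases abs_cases (x + y) with ⟨h2, _⟩ | ⟨h2, _⟩ <;>
  linarith

lemma rhoB_eq {ι : Type*} [Fintype ι] (x : ι → ℝ) :
    rhoB x = ∑ i, ∑ j, max |x i| |x j| := by
  unfold rhoB
  have : ∀ i : ι, ∑ j, (|x i - x j| + |x i + x j|) = ∑ j, 2 * max |x i| |x j| :=
    fun i => Finset.sum_congr rfl fun j _ => two_max_abs _ _
  rw [Finset.sum_congr rfl fun i _ => this i]
  simp_rw [← Finset.mul_sum]
  ring

lemma rhoSO_eq {ι : Type*} [Fintype ι] (N : ℕ) (x : ι → ℝ) :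
    rhoSO N x = (∑ i, ∑ j, max |x i| |x j|) - (if Even N then ∑ i, |x i| else 0) := by
  unfold rhoSO rhoD
  split_ifs <;> rw [rhoB_eq] <;> ring

section chain
variable {ι : Type*} [Fintype ι] [DecidableEq ι]

noncomputable def Ffun (w : ι → ι → ℝ) (v : ι → ℝ) (x : ι → ℝ) : ℝ :=
  (∑ i, ∑ j, w i j * max (x i) (x j)) + ∑ i, v i * x i

lemma Ffun_decomp (w : ι → ι → ℝ) (v : ι → ℝ) (x : ι → ℝ) (hx : ∀ i, 0 ≤ x i)
    (S : Finset ι) (hS : ∀ i, i ∈ S ↔ x i ≠ 0) (m : ℝ)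
    (hmle : ∀ i ∈ S, m ≤ x i) :
    Ffun w v x = Ffun w v (fun i => x i - m * (if i ∈ S then 1 else 0))
      + m * Ffun w v (fun i => if i ∈ S then 1 else 0) := by
  set y : ι → ℝ := fun i => x i - m * (if i ∈ S then 1 else 0) with hy
  set χ : ι → ℝ := fun i => if i ∈ S then 1 else 0 with hχ
  have hmax : ∀ i j, max (x i) (x j) = max (y i) (y j) + m * max (χ i) (χ j) := by
    intro i j
    by_cases hi : i ∈ S <;> by_cases hj : j ∈ S <;>
      simp only [hy, hχ, hi, hj, if_true, if_false, mul_one, mul_zero, sub_zero]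
    · rw [max_sub_sub_right, max_eq_left (le_refl (1:ℝ))]; ring
    · have hxj : x j = 0 := by have := (hS j).not; tauto
      rw [hxj, max_eq_left (hx i), max_eq_left (by linarith [hmle i hi] : (0:ℝ) ≤ x i - m),
        max_eq_left (by norm_num : (0:ℝ) ≤ 1)]
      ring
    · have hxi : x i = 0 := by have := (hS i).not; tauto
      rw [hxi, max_eq_right (hx j), max_eq_right (by linarith [hmle j hj] : (0:ℝ) ≤ x j - m),
        max_eq_right (by norm_num : (0:ℝ) ≤ 1)]
      ring
    · have hxi : x i = 0 := by have := (hS i).not; tauto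
      have hxj : x j = 0 := by have := (hS j).not; tauto
      rw [hxi, hxj]
      simp
  have hlin : ∀ i, x i = y i + m * χ i := by intro i; simp [hy, hχ]
  unfold Ffun
  have h1 : ∀ i : ι, ∑ j, w i j * max (x i) (x j)
      = (∑ j, w i j * max (y i) (y j)) + m * ∑ j, w i j * max (χ i) (χ j) := by
    intro i
    rw [Finset.mul_sum, ← Finset.sum_add_distrib]
    exact Finset.sum_congr rfl fun j _ => by rw [hmax i j]; ring
  have h2 : ∑ i, v i * x i = (∑ i, v i * y i) + m * ∑ i, v i * χ i := by
    rw [Finset.mul_sum, ← Finset.sum_add_distrib]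
    exact Finset.sum_congr rfl fun i _ => by rw [hlin i]; ring
  rw [Finset.sum_congr rfl fun i _ => h1 i, Finset.sum_add_distrib, ← Finset.mul_sum, h2]
  ring

lemma Ffun_zero (w : ι → ι → ℝ) (v : ι → ℝ) : Ffun w v (fun _ => 0) = 0 := by
  unfold Ffun; simp

lemma Ffun_nonneg (w : ι → ι → ℝ) (v : ι → ℝ)
    (hS : ∀ S : Finset ι, 0 ≤ Ffun w v (fun i => if i ∈ S then 1 else 0)) :
    ∀ x : ι → ℝ, (∀ i, 0 ≤ x i) → 0 ≤ Ffun w v x := by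
  suffices h : ∀ N : ℕ, ∀ x : ι → ℝ, (∀ i, 0 ≤ x i) →
      (univ.filter fun i => x i ≠ 0).card ≤ N → 0 ≤ Ffun w v x from
    fun x hx => h _ x hx le_rfl
  intro N
  induction N with
  | zero =>
    intro x hx hcard
    have hx0 : ∀ i, x i = 0 := by
      intro i
      by_contra hne
      have : i ∈ univ.filter fun i => x i ≠ 0 := by simp [hne]
      have := Finset.card_pos.2 ⟨i, this⟩
      omega
    have : x = fun _ => 0 := funext hx0
    rw [this, Ffun_zero]
  | succ N ih =>
    intro x hx hcard
    set S := univ.filter fun i => x i ≠ 0 with hSdef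
    rcases S.eq_empty_or_nonempty with hemp | hne
    · have hx0 : ∀ i, x i = 0 := by
        intro i
        by_contra hc
        have : i ∈ S := by simp [hSdef, hc]
        simp [hemp] at this
      have : x = fun _ => 0 := funext hx0
      rw [this, Ffun_zero]
    · set m := S.inf' hne x with hmdef
      obtain ⟨i0, hi0, hmi0⟩ := Finset.exists_mem_eq_inf' hne x
      have hmemS : ∀ i, i ∈ S ↔ x i ≠ 0 := by intro i; simp [hSdef]
      have hmpos : 0 < m := by
        rcases lt_or_eq_of_le (hx i0) with h | h
        · rw [hmdef, hmi0]; exact h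
        · exact absurd h.symm ((hmemS i0).1 hi0)
      have hmle : ∀ i ∈ S, m ≤ x i := fun i hi => Finset.inf'_le x hi
      set y : ι → ℝ := fun i => x i - m * (if i ∈ S then 1 else 0) with hy
      have hy0 : ∀ i, 0 ≤ y i := by
        intro i
        by_cases hi : i ∈ S <;> simp only [hy, hi, if_true, if_false, mul_one, mul_zero, sub_zero]
        · linarith [hmle i hi]
        · exact hx i
      have hycard : (univ.filter fun i => y i ≠ 0).card ≤ N := by
        have hsub : (univ.filter fun i => y i ≠ 0) ⊆ S.erase i0 := by
          intro i hi
          simp only [Finset.mem_filter, Finset.mem_univ, true_and] at hi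
          have hiS : i ∈ S := by
            by_contra hc
            apply hi
            have : x i = 0 := by
              by_contra hc2
              exact hc ((hmemS i).2 hc2)
            simp [hy, hc, this]
          refine Finset.mem_erase.2 ⟨?_, hiS⟩
          rintro rfl
          apply hi
          simp [hy, hiS, ← hmi0, ← hmdef]
        calc (univ.filter fun i => y i ≠ 0).card ≤ (S.erase i0).card :=
              Finset.card_le_card hsub
          _ = S.card - 1 := Finset.card_erase_of_mem hi0
          _ ≤ N := by omega
      rw [Ffun_decomp w v x hx S hmemS m hmle]
      exact add_nonneg (ih y hy0 hycard) (mul_nonneg hmpos.le (hS S))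

lemma Ffun_pos (w : ι → ι → ℝ) (v : ι → ℝ)
    (hS : ∀ S : Finset ι, 0 ≤ Ffun w v (fun i => if i ∈ S then 1 else 0))
    (hS' : ∀ S : Finset ι, S.Nonempty → 0 < Ffun w v (fun i => if i ∈ S then 1 else 0))
    (x : ι → ℝ) (hx : ∀ i, 0 ≤ x i) (hne : ∃ i, x i ≠ 0) : 0 < Ffun w v x := by
  set S := univ.filter fun i => x i ≠ 0 with hSdef
  obtain ⟨i1, hi1⟩ := hne
  have hSne : S.Nonempty := ⟨i1, by simp [hSdef, hi1]⟩
  set m := S.inf' hSne x with hmdef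
  obtain ⟨i0, hi0, hmi0⟩ := Finset.exists_mem_eq_inf' hSne x
  have hmemS : ∀ i, i ∈ S ↔ x i ≠ 0 := by intro i; simp [hSdef]
  have hmpos : 0 < m := by
    rcases lt_or_eq_of_le (hx i0) with h | h
    · rw [hmdef, hmi0]; exact h
    · exact absurd h.symm ((hmemS i0).1 hi0)
  have hmle : ∀ i ∈ S, m ≤ x i := fun i hi => Finset.inf'_le x hi
  have hy0 : ∀ i, 0 ≤ x i - m * (if i ∈ S then 1 else 0) := by
    intro i
    by_cases hi : i ∈ S <;> simp only [hi, if_true, if_false, mul_one, mul_zero, sub_zero]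
    · linarith [hmle i hi]
    · exact hx i
  rw [Ffun_decomp w v x hx S hmemS m hmle]
  have := Ffun_nonneg w v hS _ hy0
  nlinarith [hS' S hSne]

end chain

-- core integer inequality
lemma coreId {r : ℕ} (nn p : Fin r → ℕ) (n : ℕ) :
    (∑ k, (p k : ℤ)) * ((n : ℤ) - 1 - ∑ k, (p k : ℤ))
      - 2 * ∑ k, (p k : ℤ) * ((nn k : ℤ) - p k - 1)
    = (∑ k, (p k : ℤ)) * ((n : ℤ) - (∑ k, (nn k : ℤ)) + 1)
      + ∑ k, ((nn k : ℤ) - p k) * ((∑ l, (p l : ℤ)) - 2 * p k) := by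
  set J : ℤ := ∑ k, (p k : ℤ) with hJ
  have key : ∀ k : Fin r, ((nn k : ℤ) - p k) * (J - 2 * p k)
      = ((nn k : ℤ) * J - (p k : ℤ) * J - 2 * p k) - 2 * ((p k : ℤ) * ((nn k : ℤ) - p k - 1)) := by
    intro k; ring
  rw [Finset.sum_congr rfl fun k _ => key k, Finset.sum_sub_distrib, Finset.sum_sub_distrib,
    Finset.sum_sub_distrib, ← Finset.sum_mul, ← Finset.sum_mul, ← Finset.mul_sum, ← hJ,
    ← Finset.mul_sum]
  ring

lemma core_main {r : ℕ} (hr : 0 < r) (nn p : Fin r → ℕ) (n : ℕ)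
    (hmono : Antitone nn) (hp : ∀ k, 2 * p k ≤ nn k) (hn : ∑ k, nn k ≤ n)
    (c : ℕ) (hc : c ≤ 1) (h1 : 2 * nn ⟨0, hr⟩ + c ≤ n + 2) :
    (c : ℤ) * (if 1 ≤ ∑ k, p k then 1 else 0) +
    2 * ∑ k, (p k : ℤ) * ((nn k : ℤ) - p k - 1)
      ≤ (∑ k, (p k : ℤ)) * ((n : ℤ) - 1 - ∑ k, (p k : ℤ)) := by
  rw [← sub_nonneg]
  have hco := coreId nn p n
  have hsplit : (∑ k, (p k : ℤ)) * ((n : ℤ) - 1 - ∑ k, (p k : ℤ))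
      - (((c : ℤ) * (if 1 ≤ ∑ k, p k then 1 else 0)) + 2 * ∑ k, (p k : ℤ) * ((nn k : ℤ) - p k - 1))
      = (∑ k, (p k : ℤ)) * ((n : ℤ) - (∑ k, (nn k : ℤ)) + 1)
        + (∑ k, ((nn k : ℤ) - p k) * ((∑ l, (p l : ℤ)) - 2 * p k))
        - (c : ℤ) * (if 1 ≤ ∑ k, p k then 1 else 0) := by
    rw [← hco]; ring
  rw [hsplit]
  obtain ⟨t, -, ht⟩ := Finset.exists_max_image univ p ⟨⟨0, hr⟩, Finset.mem_univ _⟩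
  have ht' : ∀ k, p k ≤ p t := fun k => ht k (Finset.mem_univ k)
  have hd : (0:ℤ) ≤ (n : ℤ) - (∑ k, (nn k : ℤ)) := by
    have : ((∑ k, nn k : ℕ) : ℤ) ≤ (n : ℤ) := Int.ofNat_le.2 hn
    push_cast at this
    linarith
  have hJ0 : (0:ℤ) ≤ ∑ k, (p k : ℤ) := Finset.sum_nonneg fun k _ => Int.ofNat_nonneg _
  have hnp : ∀ k, (p k : ℤ) ≤ (nn k : ℤ) := by
    intro k
    have := hp k
    have : p k ≤ nn k := by omega
    exact_mod_cast this
  by_cases hcase : 2 * p t ≤ ∑ k, p k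
  · -- all terms nonnegative
    have hterm : ∀ k ∈ univ, (0:ℤ) ≤ ((nn k : ℤ) - p k) * ((∑ l, (p l : ℤ)) - 2 * p k) := by
      intro k _
      apply mul_nonneg (by linarith [hnp k])
      have h2 : 2 * p k ≤ ∑ l, p l := le_trans (by have := ht' k; omega) hcase
      have : ((2 * p k : ℕ) : ℤ) ≤ ((∑ l, p l : ℕ) : ℤ) := Int.ofNat_le.2 h2
      push_cast at this
      linarith
    have hsum := Finset.sum_nonneg hterm
    by_cases hJ : 1 ≤ ∑ k, p k
    · have hJ1 : (1:ℤ) ≤ ∑ k, (p k : ℤ) := by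
        have : ((1:ℕ) : ℤ) ≤ ((∑ k, p k : ℕ) : ℤ) := Int.ofNat_le.2 hJ
        push_cast at this
        push_cast
        linarith
      have hcZ : (c:ℤ) ≤ 1 := by exact_mod_cast hc
      simp only [hJ, if_true]
      nlinarith
    · simp only [hJ, if_false]
      nlinarith
  · -- dominant block t
    push_neg at hcase
    have hJt : p t ≤ ∑ k, p k := Finset.single_le_sum (fun l _ => Nat.zero_le _) (Finset.mem_univ t)
    have hJ : 1 ≤ ∑ k, p k := by omega
    simp only [hJ, if_true, mul_one]
    have hbig : ∑ k, ((nn k : ℤ) - p k) * ((∑ l, (p l : ℤ)) - 2 * p k)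
        = ((nn t : ℤ) - p t) * ((∑ l, (p l : ℤ)) - 2 * p t)
          + ∑ k ∈ univ.erase t, ((nn k : ℤ) - p k) * ((∑ l, (p l : ℤ)) - 2 * p k) :=
      (Finset.add_sum_erase _ _ (Finset.mem_univ t)).symm
    rw [hbig]
    have hJsplit : (∑ k, (p k : ℤ)) = (p t : ℤ) + ∑ k ∈ univ.erase t, (p k : ℤ) :=
      (Finset.add_sum_erase _ _ (Finset.mem_univ t)).symm
    have hNsplit : (∑ k, (nn k : ℤ)) = (nn t : ℤ) + ∑ k ∈ univ.erase t, (nn k : ℤ) :=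
      (Finset.add_sum_erase _ _ (Finset.mem_univ t)).symm
    have hP'p : ∀ k ∈ univ.erase t, (p k : ℤ) ≤ ∑ l ∈ univ.erase t, (p l : ℤ) :=
      fun k hk => Finset.single_le_sum (fun l _ => Int.ofNat_nonneg (p l)) hk
    have hbound1 : (∑ k ∈ univ.erase t, ((nn k : ℤ) - p k))
          * ((p t : ℤ) - ∑ l ∈ univ.erase t, (p l : ℤ))
        ≤ ∑ k ∈ univ.erase t, ((nn k : ℤ) - p k) * ((∑ l, (p l : ℤ)) - 2 * p k) := by
      rw [Finset.sum_mul]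
      apply Finset.sum_le_sum
      intro k hk
      apply mul_le_mul_of_nonneg_left _ (by linarith [hnp k])
      rw [hJsplit]
      linarith [hP'p k hk]
    rw [Finset.sum_sub_distrib] at hbound1
    -- scalar abbreviations
    set Pt : ℤ := (p t : ℤ) with hPt
    set P' : ℤ := ∑ k ∈ univ.erase t, (p k : ℤ) with hP'
    set A : ℤ := ∑ k ∈ univ.erase t, (nn k : ℤ) with hA
    set R : ℤ := ∑ k ∈ univ.erase t, ((nn k : ℤ) - p k) * ((∑ l, (p l : ℤ)) - 2 * p k) with hR
    have hu : P' + 1 ≤ Pt := by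
      have h2 : ((∑ k, p k : ℕ) : ℤ) < ((2 * p t : ℕ) : ℤ) := Int.ofNat_lt.2 hcase
      push_cast at h2
      rw [show (∑ x : Fin r, ((p x : ℤ))) = Pt + P' from hJsplit] at h2
      linarith
    have hAP' : P' ≤ A := Finset.sum_le_sum fun k _ => hnp k
    have hP'0 : 0 ≤ P' := Finset.sum_nonneg fun k _ => Int.ofNat_nonneg _
    have hnt : (nn t : ℤ) + (c : ℤ) ≤ A + ((n : ℤ) - (∑ k, (nn k : ℤ))) + 2 := by
      have h0t : nn t ≤ nn ⟨0, hr⟩ := hmono (by simp [Fin.le_def])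
      have h2 : 2 * nn t + c ≤ n + 2 := by omega
      have hZ : 2 * (nn t : ℤ) + (c : ℤ) ≤ (n : ℤ) + 2 := by exact_mod_cast h2
      rw [hNsplit]
      linarith
    rw [hJsplit, hNsplit]
    rw [hNsplit] at hd
    have hc0 : (0:ℤ) ≤ (c:ℤ) := Int.ofNat_nonneg c
    have hd' : 0 ≤ (n:ℤ) - ((nn t : ℤ) + A) := hd
    have hu0 : (0:ℤ) ≤ Pt - P' := by linarith
    nlinarith [mul_nonneg hP'0 (by linarith : (0:ℤ) ≤ ((n:ℤ) - ((nn t:ℤ) + A)) + 1),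
      mul_nonneg (by linarith : (0:ℤ) ≤ Pt - P' - 1) hu0,
      mul_nonneg (by linarith : (0:ℤ) ≤ Pt - P' - 1) hc0,
      mul_nonneg hu0 (by linarith : (0:ℤ) ≤ A + ((n:ℤ) - ((nn t:ℤ) + A)) + 2 - (c:ℤ) - Pt - ((nn t:ℤ) - Pt)),
      hbound1]

lemma sum_sigma_univ {r : ℕ} {β : Fin r → Type*} [∀ k, Fintype (β k)] {M : Type*}
    [AddCommMonoid M] (f : (Σ k, β k) → M) :
    ∑ i : Σ k, β k, f i = ∑ k, ∑ b : β k, f ⟨k, b⟩ := by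
  rw [← Finset.sum_sigma]
  congr 1

lemma sum_ite_const' {α M : Type*} [Fintype α] [AddCommMonoid M] (c : Prop) [Decidable c]
    (f : α → M) : (∑ x : α, if c then f x else 0) = if c then ∑ x, f x else 0 := by
  split_ifs <;> simp

lemma block_double_sum {r : ℕ} {β : Fin r → Type*} [∀ k, Fintype (β k)]
    (g : (Σ k, β k) → (Σ k, β k) → ℝ) :
    ∑ i : Σ k, β k, ∑ j : Σ k, β k, (if i.1 = j.1 then (1:ℝ) else 0) * g i j
      = ∑ k, ∑ b₁ : β k, ∑ b₂ : β k, g ⟨k, b₁⟩ ⟨k, b₂⟩ := by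
  rw [sum_sigma_univ]
  refine Finset.sum_congr rfl fun k _ => Finset.sum_congr rfl fun b₁ _ => ?_
  rw [sum_sigma_univ (f := fun j => (if (⟨k, b₁⟩ : Σ k, β k).1 = j.1 then (1:ℝ) else 0) * g ⟨k, b₁⟩ j)]
  have : ∀ l : Fin r, (∑ b₂ : β l, (if k = l then (1:ℝ) else 0) * g ⟨k, b₁⟩ ⟨l, b₂⟩)
      = if k = l then ∑ b₂ : β l, g ⟨k, b₁⟩ ⟨l, b₂⟩ else 0 := by
    intro l
    rw [← sum_ite_const' (k = l) (fun b₂ : β l => g ⟨k, b₁⟩ ⟨l, b₂⟩)]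
    exact Finset.sum_congr rfl fun b₂ _ => by split_ifs <;> ring
  rw [Finset.sum_congr rfl fun l _ => this l, Finset.sum_ite_eq]
  simp

lemma card_fiber_univ {r : ℕ} {β : Fin r → Type*} [∀ k, Fintype (β k)] [DecidableEq (Fin r)]
    (k : Fin r) : ((univ : Finset (Σ k, β k)).filter fun i => i.1 = k).card
      = Fintype.card (β k) := by
  rw [Finset.card_filter, sum_sigma_univ (f := fun i : Σ k, β k => if i.1 = k then 1 else 0)]
  have : ∀ l : Fin r, (∑ _b : β l, if l = k then 1 else 0) = if l = k then Fintype.card (β l) else 0 := by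
    intro l
    rw [sum_ite_const']
    split_ifs <;> simp [Finset.card_univ]
  rw [Finset.sum_congr rfl fun l _ => this l, Finset.sum_ite_eq']
  simp

lemma sum_S_block {r : ℕ} {β : Fin r → Type*} [∀ k, Fintype (β k)]
    (S : Finset (Σ k, β k)) (f : Fin r → ℝ) :
    ∑ i ∈ S, f i.1 = ∑ k, ((S.filter fun i => i.1 = k).card : ℝ) * f k := by
  have h1 : ∀ i : Σ k, β k, f i.1 = ∑ k, if i.1 = k then f k else 0 := by
    intro i
    rw [Finset.sum_ite_eq]
    simp
  rw [Finset.sum_congr rfl fun i _ => h1 i, Finset.sum_comm]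
  refine Finset.sum_congr rfl fun k _ => ?_
  rw [Finset.card_filter]
  push_cast
  rw [Finset.sum_mul]
  refine Finset.sum_congr rfl fun i _ => ?_
  split_ifs <;> simp

lemma nat_half_cast (N : ℕ) :
    (N : ℝ) = 2 * ((N / 2 : ℕ) : ℝ) + 1 - (if Even N then 1 else 0) := by
  have h3 : N = 2 * (N / 2) + N % 2 := by omega
  have h4 : (N : ℝ) = 2 * ((N / 2 : ℕ) : ℝ) + ((N % 2 : ℕ) : ℝ) := by
    exact_mod_cast congrArg (fun t : ℕ => (t : ℝ)) h3
  rw [h4]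
  rcases Nat.even_or_odd N with h | h
  · rw [if_pos h, Nat.even_iff.mp h]
    norm_num
  · rw [if_neg (Nat.not_even_iff_odd.mpr h), Nat.odd_iff.mp h]
    norm_num
set_option maxHeartbeats 1000000 in
lemma evalS {r : ℕ} (nn : Fin r → ℕ) (n : ℕ) (hn : ∑ k, nn k ≤ n)
    (S : Finset ((k : Fin r) × Fin (nn k / 2))) :
    Ffun (fun i j => if i.1 = j.1 then (-1:ℝ) else 1)
      (fun i => 2 * ((n / 2 - ∑ k, nn k / 2 : ℕ) : ℝ) - (if Even n then 1 else 0)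
        + (if Even (nn i.1) then 2 else 0))
      (fun i => if i ∈ S then (1:ℝ) else 0)
    = (S.card : ℝ) * ((n : ℝ) - 1 - S.card)
      - 2 * ∑ k, ((S.filter fun i => i.1 = k).card : ℝ)
          * ((nn k : ℝ) - (S.filter fun i => i.1 = k).card - 1) := by
  classical
  set χ : ((k : Fin r) × Fin (nn k / 2)) → ℝ := fun i => if i ∈ S then (1:ℝ) else 0 with hχ
  set p : Fin r → ℝ := fun k => ((S.filter fun i => i.1 = k).card : ℝ) with hp
  set mR : Fin r → ℝ := fun k => ((nn k / 2 : ℕ) : ℝ) with hmR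
  set J : ℝ := (S.card : ℝ) with hJ
  set Nσ : ℝ := ∑ k, mR k with hNσ
  set z' : ℝ := ((n / 2 - ∑ k, nn k / 2 : ℕ) : ℝ) with hz'
  set eG : ℝ := (if Even n then (1:ℝ) else 0) with heG
  set χE : Fin r → ℝ := fun k => if Even (nn k) then (1:ℝ) else 0 with hχE
  -- basic facts
  have hJp : ∑ k, p k = J := by
    rw [hJ, hp]
    rw [Finset.card_eq_sum_card_fiberwise (f := fun i => i.1) (t := univ)
      (fun x _ => Finset.mem_univ _)]
    push_cast
    rfl
  have hmax : ∀ i j, max (χ i) (χ j) = χ i + χ j - χ i * χ j := by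
    intro i j
    by_cases hi : i ∈ S <;> by_cases hj : j ∈ S <;> simp [hχ, hi, hj]
  have hfib : ∀ k, ((univ : Finset ((k : Fin r) × Fin (nn k / 2))).filter
      fun i => i.1 = k).card = nn k / 2 := by
    intro k
    rw [card_fiber_univ]
    simp
  have hsum_univ : ∀ f : Fin r → ℝ, ∑ i : (k : Fin r) × Fin (nn k / 2), f i.1
      = ∑ k, mR k * f k := by
    intro f
    rw [sum_S_block univ f]
    exact Finset.sum_congr rfl fun k _ => by rw [hfib k]
  have hsumS : ∀ f : Fin r → ℝ, ∑ i : (k : Fin r) × Fin (nn k / 2), f i.1 * χ i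
      = ∑ k, p k * f k := by
    intro f
    have : ∀ i : (k : Fin r) × Fin (nn k / 2), f i.1 * χ i = if i ∈ S then f i.1 else 0 := by
      intro i
      simp only [hχ]
      split_ifs <;> ring
    rw [Finset.sum_congr rfl fun i _ => this i, Finset.sum_ite_mem, Finset.univ_inter,
      sum_S_block S f]
  have hchiJ : ∑ j : (k : Fin r) × Fin (nn k / 2), χ j = J := by
    simp only [hχ]
    rw [Finset.sum_ite_mem, Finset.univ_inter, Finset.sum_const, nsmul_eq_mul, mul_one, hJ]
  have hrow : ∀ i : (k : Fin r) × Fin (nn k / 2),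
      (∑ j : (k : Fin r) × Fin (nn k / 2), if i.1 = j.1 then (-1:ℝ) else 1)
        = Nσ - 2 * mR i.1 := by
    intro i
    have h1 : ∀ j : (k : Fin r) × Fin (nn k / 2), (if i.1 = j.1 then (-1:ℝ) else 1)
        = 1 - 2 * (if j.1 = i.1 then (1:ℝ) else 0) := by
      intro j
      rcases eq_or_ne i.1 j.1 with h | h
      · rw [if_pos h, if_pos h.symm]; ring
      · rw [if_neg h, if_neg (Ne.symm h)]; ring
    rw [Finset.sum_congr rfl fun j _ => h1 j]
    have h2 : ∑ j : (k : Fin r) × Fin (nn k / 2), (if j.1 = i.1 then (1:ℝ) else 0)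
        = mR i.1 := by
      rw [hsum_univ (fun l => if l = i.1 then (1:ℝ) else 0), Finset.sum_congr rfl
        (fun k _ => by rw [mul_ite, mul_one, mul_zero]), Finset.sum_ite_eq']
      simp
    rw [Finset.sum_sub_distrib, ← Finset.mul_sum, h2, Finset.sum_const, Finset.card_univ]
    have h3 : (Fintype.card ((k : Fin r) × Fin (nn k / 2)) : ℝ) = Nσ := by
      rw [Fintype.card_sigma, hNσ]
      push_cast
      exact Finset.sum_congr rfl fun k _ => by rw [Fintype.card_fin, hmR]
    rw [nsmul_eq_mul, mul_one, h3]
  have hrowS : ∀ i : (k : Fin r) × Fin (nn k / 2),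
      (∑ j : (k : Fin r) × Fin (nn k / 2), (if i.1 = j.1 then (-1:ℝ) else 1) * χ j)
        = J - 2 * p i.1 := by
    intro i
    have h1 : ∀ j : (k : Fin r) × Fin (nn k / 2), (if i.1 = j.1 then (-1:ℝ) else 1) * χ j
        = χ j - 2 * (if j ∈ S ∧ j.1 = i.1 then (1:ℝ) else 0) := by
      intro j
      simp only [hχ]
      rcases eq_or_ne i.1 j.1 with h | h <;> by_cases hj : j ∈ S
      · rw [if_pos h, if_pos hj, if_pos ⟨hj, h.symm⟩]; ring
      · rw [if_pos h, if_neg hj, if_neg (by tauto)]; ring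
      · rw [if_neg h, if_pos hj, if_neg (fun hc => h hc.2.symm)]; ring
      · rw [if_neg h, if_neg hj, if_neg (by tauto)]; ring
    have h2 : ∑ j : (k : Fin r) × Fin (nn k / 2), (if j ∈ S ∧ j.1 = i.1 then (1:ℝ) else 0)
        = p i.1 := by
      rw [Finset.sum_boole, hp]
      congr 2
      ext j
      simp [and_comm]
    rw [Finset.sum_congr rfl fun j _ => h1 j, Finset.sum_sub_distrib, ← Finset.mul_sum,
      h2, hchiJ]
  -- expand Ffun
  have hexp : Ffun (fun i j => if i.1 = j.1 then (-1:ℝ) else 1)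
      (fun i => 2 * z' - eG + (if Even (nn i.1) then 2 else 0)) χ
      = (∑ i : (k : Fin r) × Fin (nn k / 2),
          ((Nσ - 2 * mR i.1) * χ i + (J - 2 * p i.1) - (J - 2 * p i.1) * χ i))
        + ∑ i : (k : Fin r) × Fin (nn k / 2), (2 * z' - eG + 2 * χE i.1) * χ i := by
    unfold Ffun
    congr 1
    · refine Finset.sum_congr rfl fun i _ => ?_
      have h1 : ∀ j : (k : Fin r) × Fin (nn k / 2),
          (if i.1 = j.1 then (-1:ℝ) else 1) * max (χ i) (χ j)
          = (if i.1 = j.1 then (-1:ℝ) else 1) * χ i + (if i.1 = j.1 then (-1:ℝ) else 1) * χ j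
            - ((if i.1 = j.1 then (-1:ℝ) else 1) * χ j) * χ i := by
        intro j
        rw [hmax i j]
        ring
      rw [Finset.sum_congr rfl fun j _ => h1 j, Finset.sum_sub_distrib,
        Finset.sum_add_distrib, ← Finset.sum_mul, ← Finset.sum_mul, hrow i, hrowS i]
    · refine Finset.sum_congr rfl fun i _ => ?_
      simp only [hχE]
      split_ifs <;> ring
  have hTa := hsumS (fun k => Nσ - 2 * mR k)
  have hTb := hsum_univ (fun k => J - 2 * p k)
  have hTc := hsumS (fun k => J - 2 * p k)
  have hTd := hsumS (fun k => 2 * z' - eG + 2 * χE k)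
  have hle : ∑ k, nn k / 2 ≤ n / 2 := by
    have h2 : 2 * ∑ k, nn k / 2 ≤ ∑ k, nn k := by
      rw [Finset.mul_sum]
      exact Finset.sum_le_sum fun k _ => by omega
    exact (Nat.le_div_iff_mul_le (by norm_num)).mpr (by omega)
  have hNσ' : ((∑ k, nn k / 2 : ℕ) : ℝ) = Nσ := by
    rw [hNσ, Nat.cast_sum]
  have hn1 : (n : ℝ) - 1 = 2 * Nσ + 2 * z' - eG := by
    have hz'' : z' = ((n / 2 : ℕ) : ℝ) - ((∑ k, nn k / 2 : ℕ) : ℝ) := by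
      rw [hz', Nat.cast_sub hle]
    have hn' : (n : ℝ) = 2 * ((n / 2 : ℕ) : ℝ) + 1 - eG := by
      rw [heG]; exact nat_half_cast n
    rw [hz''] at *
    rw [hn']
    rw [hNσ'] at *
    ring
  have hfin : ∀ k, p k * (Nσ - 2 * mR k) + mR k * (J - 2 * p k) - p k * (J - 2 * p k)
      + p k * (2 * z' - eG + 2 * χE k) + 2 * (p k * ((nn k : ℝ) - p k - 1))
      = p k * (Nσ + 2 * z' - eG - J) + mR k * J := by
    intro k
    simp only [hmR, hχE]
    rw [nat_half_cast (nn k)]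
    ring
  have hbig : ∑ k, (p k * (Nσ - 2 * mR k) + mR k * (J - 2 * p k) - p k * (J - 2 * p k)
      + p k * (2 * z' - eG + 2 * χE k) + 2 * (p k * ((nn k : ℝ) - p k - 1)))
      = J * (Nσ + 2 * z' - eG - J) + Nσ * J := by
    rw [Finset.sum_congr rfl fun k _ => hfin k, Finset.sum_add_distrib,
      ← Finset.sum_mul, ← Finset.sum_mul, hJp, ← hNσ]
  have hsplit : ∑ k, (p k * (Nσ - 2 * mR k) + mR k * (J - 2 * p k) - p k * (J - 2 * p k)
      + p k * (2 * z' - eG + 2 * χE k) + 2 * (p k * ((nn k : ℝ) - p k - 1)))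
      = (∑ k, p k * (Nσ - 2 * mR k)) + (∑ k, mR k * (J - 2 * p k))
        - (∑ k, p k * (J - 2 * p k)) + (∑ k, p k * (2 * z' - eG + 2 * χE k))
        + 2 * ∑ k, p k * ((nn k : ℝ) - p k - 1) := by
    rw [Finset.mul_sum, Finset.sum_add_distrib, Finset.sum_add_distrib,
      Finset.sum_sub_distrib, Finset.sum_add_distrib]
  rw [hexp, Finset.sum_sub_distrib, Finset.sum_add_distrib, hTa, hTb, hTc, hTd]
  rw [hsplit] at hbig
  linear_combination hbig - J * hn1

set_option maxHeartbeats 1000000 in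
lemma bridge {r : ℕ} (nn : Fin r → ℕ) (n : ℕ) (a : (k : Fin r) → Fin (nn k / 2) → ℝ) :
    rhoSO n (Sum.elim (fun x : (k : Fin r) × Fin (nn k / 2) => a x.1 x.2)
        (fun _ : Fin (n / 2 - ∑ k, nn k / 2) => (0 : ℝ)))
      - 2 * (∑ k, rhoSO (nn k) (a k))
    = Ffun (fun i j : (k : Fin r) × Fin (nn k / 2) => if i.1 = j.1 then (-1:ℝ) else 1)
        (fun i : (k : Fin r) × Fin (nn k / 2) =>
          2 * ((n / 2 - ∑ k, nn k / 2 : ℕ) : ℝ) - (if Even n then 1 else 0)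
          + (if Even (nn i.1) then 2 else 0))
        (fun i : (k : Fin r) × Fin (nn k / 2) => |a i.1 i.2|) := by
  classical
  set x : ((k : Fin r) × Fin (nn k / 2)) → ℝ := fun i => |a i.1 i.2| with hx
  set z : ℕ := n / 2 - ∑ k, nn k / 2 with hz
  set c : ((k : Fin r) × Fin (nn k / 2)) ⊕ Fin z → ℝ :=
    Sum.elim (fun x : (k : Fin r) × Fin (nn k / 2) => a x.1 x.2)
      (fun _ : Fin z => (0 : ℝ)) with hc
  have habs1 : ∀ i : (k : Fin r) × Fin (nn k / 2), |c (Sum.inl i)| = x i := fun i => rfl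
  have habs2 : ∀ b : Fin z, |c (Sum.inr b)| = 0 := fun b => abs_zero
  have hxnn : ∀ i, 0 ≤ x i := fun i => abs_nonneg _
  have hM : ∑ i : ((k : Fin r) × Fin (nn k / 2)) ⊕ Fin z,
      ∑ j : ((k : Fin r) × Fin (nn k / 2)) ⊕ Fin z, max |c i| |c j|
      = (∑ i : (k : Fin r) × Fin (nn k / 2), ∑ j : (k : Fin r) × Fin (nn k / 2),
          max (x i) (x j)) + 2 * (z : ℝ) * ∑ i : (k : Fin r) × Fin (nn k / 2), x i := by
    rw [Fintype.sum_sum_type (fun i => ∑ j, max |c i| |c j|)]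
    have hin : ∀ i : (k : Fin r) × Fin (nn k / 2),
        ∑ j : ((k : Fin r) × Fin (nn k / 2)) ⊕ Fin z, max |c (Sum.inl i)| |c j|
        = (∑ j : (k : Fin r) × Fin (nn k / 2), max (x i) (x j)) + (z : ℝ) * x i := by
      intro i
      rw [Fintype.sum_sum_type (fun j => max |c (Sum.inl i)| |c j|)]
      have e0 : ∑ j : (k : Fin r) × Fin (nn k / 2), max |c (Sum.inl i)| |c (Sum.inl j)|
          = ∑ j : (k : Fin r) × Fin (nn k / 2), max (x i) (x j) :=
        Finset.sum_congr rfl fun j _ => by rw [habs1 i, habs1 j]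
      have e : ∀ b : Fin z, max |c (Sum.inl i)| |c (Sum.inr b)| = x i := fun b => by
        rw [habs1, habs2]; exact max_eq_left (hxnn i)
      have eA : ∑ b : Fin z, max |c (Sum.inl i)| |c (Sum.inr b)| = (z : ℝ) * x i := by
        rw [Finset.sum_congr rfl fun b _ => e b, Finset.sum_const, Finset.card_univ,
          Fintype.card_fin, nsmul_eq_mul]
      rw [e0, eA]
    have hin2 : ∀ b : Fin z,
        ∑ j : ((k : Fin r) × Fin (nn k / 2)) ⊕ Fin z, max |c (Sum.inr b)| |c j|
        = ∑ i : (k : Fin r) × Fin (nn k / 2), x i := by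
      intro b
      rw [Fintype.sum_sum_type (fun j => max |c (Sum.inr b)| |c j|)]
      have e1 : ∀ j : (k : Fin r) × Fin (nn k / 2), max |c (Sum.inr b)| |c (Sum.inl j)|
          = x j := fun j => by rw [habs1, habs2, max_eq_right (hxnn j)]
      have e2 : ∀ b' : Fin z, max |c (Sum.inr b)| |c (Sum.inr b')| = 0 :=
        fun b' => by rw [habs2, habs2, max_self]
      rw [Finset.sum_congr rfl fun j _ => e1 j, Finset.sum_congr rfl fun b' _ => e2 b',
        Finset.sum_const_zero, add_zero]
    rw [Finset.sum_congr rfl fun i _ => hin i, Finset.sum_congr rfl fun b _ => hin2 b]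
    rw [Finset.sum_add_distrib]
    rw [← Finset.mul_sum]
    rw [Finset.sum_const, Finset.card_univ, Fintype.card_fin, nsmul_eq_mul]
    ring
  have hScabs : ∑ i, |c i| = ∑ i : (k : Fin r) × Fin (nn k / 2), x i := by
    rw [Fintype.sum_sum_type (fun i => |c i|)]
    rw [Finset.sum_congr rfl fun i _ => habs1 i, Finset.sum_congr rfl fun b _ => habs2 b,
      Finset.sum_const_zero, add_zero]
  have hblock : ∑ k, rhoSO (nn k) (a k)
      = (∑ i : (k : Fin r) × Fin (nn k / 2), ∑ j : (k : Fin r) × Fin (nn k / 2),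
          (if i.1 = j.1 then (1:ℝ) else 0) * max (x i) (x j))
        - ∑ i : (k : Fin r) × Fin (nn k / 2), (if Even (nn i.1) then (1:ℝ) else 0) * x i := by
    rw [block_double_sum (fun i j => max (x i) (x j)),
      sum_sigma_univ (f := fun i : (k : Fin r) × Fin (nn k / 2) =>
        (if Even (nn i.1) then (1:ℝ) else 0) * x i), ← Finset.sum_sub_distrib]
    refine Finset.sum_congr rfl fun k _ => ?_
    dsimp only
    rw [rhoSO_eq]; simp only [hx]
    congr 1
    split_ifs <;> simp
  rw [rhoSO_eq, hM, hScabs, hblock]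
  unfold Ffun
  have hw : ∀ i j : (k : Fin r) × Fin (nn k / 2),
      (if i.1 = j.1 then (-1:ℝ) else 1) * max (x i) (x j)
      = max (x i) (x j) - 2 * ((if i.1 = j.1 then (1:ℝ) else 0) * max (x i) (x j)) := by
    intro i j
    split_ifs <;> ring
  have hwsum : ∑ i : (k : Fin r) × Fin (nn k / 2), ∑ j : (k : Fin r) × Fin (nn k / 2),
      (if i.1 = j.1 then (-1:ℝ) else 1) * max (x i) (x j)
      = (∑ i : (k : Fin r) × Fin (nn k / 2), ∑ j : (k : Fin r) × Fin (nn k / 2),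
          max (x i) (x j))
        - 2 * ∑ i : (k : Fin r) × Fin (nn k / 2), ∑ j : (k : Fin r) × Fin (nn k / 2),
            (if i.1 = j.1 then (1:ℝ) else 0) * max (x i) (x j) := by
    rw [Finset.mul_sum, ← Finset.sum_sub_distrib]
    refine Finset.sum_congr rfl fun i _ => ?_
    rw [Finset.mul_sum, ← Finset.sum_sub_distrib]
    exact Finset.sum_congr rfl fun j _ => hw i j
  have hvsum : ∑ i : (k : Fin r) × Fin (nn k / 2),
      (2 * (z : ℝ) - (if Even n then 1 else 0) + (if Even (nn i.1) then 2 else 0)) * x i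
      = (2 * (z : ℝ) - (if Even n then 1 else 0)) * (∑ i : (k : Fin r) × Fin (nn k / 2), x i)
        + 2 * ∑ i : (k : Fin r) × Fin (nn k / 2), (if Even (nn i.1) then (1:ℝ) else 0) * x i := by
    rw [Finset.mul_sum, Finset.mul_sum, ← Finset.sum_add_distrib]
    refine Finset.sum_congr rfl fun i _ => ?_
    split_ifs <;> ring
  rw [hwsum, hvsum]
  split_ifs <;> ring

set_option maxHeartbeats 1000000 in
lemma perS {r n : ℕ} (hr : 0 < r) (nn : Fin r → ℕ)
    (hmono : Antitone nn) (hn : ∑ k, nn k ≤ n)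
    (c : ℕ) (hc : c ≤ 1) (h1 : 2 * nn ⟨0, hr⟩ + c ≤ n + 2)
    (S : Finset ((k : Fin r) × Fin (nn k / 2))) :
    (c : ℝ) * (if 1 ≤ S.card then 1 else 0)
      ≤ Ffun (fun i j : (k : Fin r) × Fin (nn k / 2) => if i.1 = j.1 then (-1:ℝ) else 1)
        (fun i : (k : Fin r) × Fin (nn k / 2) =>
          2 * ((n / 2 - ∑ k, nn k / 2 : ℕ) : ℝ) - (if Even n then 1 else 0)
          + (if Even (nn i.1) then 2 else 0))
        (fun i => if i ∈ S then (1:ℝ) else 0) := by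
  classical
  rw [evalS nn n hn S]
  set p : Fin r → ℕ := fun k => (S.filter fun i => i.1 = k).card with hp
  have hpk : ∀ k, 2 * p k ≤ nn k := by
    intro k
    have h2 : p k ≤ nn k / 2 := by
      have hsub : (S.filter fun i => i.1 = k) ⊆ ((univ : Finset _).filter fun i => i.1 = k) :=
        Finset.filter_subset_filter _ (Finset.subset_univ S)
      have := Finset.card_le_card hsub
      rw [card_fiber_univ k] at this
      simpa using this
    omega
  have hpsum : ∑ k, p k = S.card :=
    (Finset.card_eq_sum_card_fiberwise
      (f := fun i : (k : Fin r) × Fin (nn k / 2) => i.1) (t := univ)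
      fun x _ => Finset.mem_univ _).symm
  have hz := core_main hr nn p n hmono hpk hn c hc h1
  have hzsum : (∑ k, (p k : ℤ)) = (S.card : ℤ) := by
    exact_mod_cast congrArg (fun t : ℕ => (t : ℤ)) hpsum
  rw [hpsum, hzsum] at hz
  have hzr : ((((c:ℤ) * if 1 ≤ S.card then 1 else 0) +
      2 * ∑ k, (p k : ℤ) * ((nn k : ℤ) - p k - 1) : ℤ) : ℝ)
      ≤ (((S.card : ℤ) * ((n:ℤ) - 1 - S.card) : ℤ) : ℝ) := Int.cast_le.mpr hz
  by_cases hS1 : 1 ≤ S.card <;>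
    simp only [hS1, if_true, if_false] at hzr ⊢ <;>
    push_cast at hzr <;> linarith

end BKaux

/-- Benoist–Kobayashi inequalities for
`𝔥 = 𝔰𝔬_{n_1} ⊕ ⋯ ⊕ 𝔰𝔬_{n_r} ⊂ 𝔤 = 𝔰𝔬_n` (block diagonal). -/
theorem stmt12 (r n : ℕ) (hr : 1 ≤ r) (nn : Fin r → ℕ)
    (hmono : Antitone nn) (hpos : ∀ k, 1 ≤ nn k) (hn : (∑ k, nn k) ≤ n) :
    ((∀ a : (k : Fin r) → Fin (nn k / 2) → ℝ,
        2 * (∑ k, rhoSO (nn k) (a k)) ≤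
          rhoSO n (Sum.elim (fun x : Σ k : Fin r, Fin (nn k / 2) => a x.1 x.2)
            (fun _ : Fin (n / 2 - ∑ k, nn k / 2) => (0 : ℝ)))) ↔
      2 * nn ⟨0, hr⟩ ≤ n + 2) ∧
    ((∀ a : (k : Fin r) → Fin (nn k / 2) → ℝ, a ≠ 0 →
        2 * (∑ k, rhoSO (nn k) (a k)) <
          rhoSO n (Sum.elim (fun x : Σ k : Fin r, Fin (nn k / 2) => a x.1 x.2)
            (fun _ : Fin (n / 2 - ∑ k, nn k / 2) => (0 : ℝ)))) ↔
      2 * nn ⟨0, hr⟩ ≤ n + 1) := by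
  classical
  have hn1 : 1 ≤ n := by
    have h0 : nn ⟨0, hr⟩ ≤ ∑ k, nn k :=
      Finset.single_le_sum (f := nn) (fun k _ => Nat.zero_le _) (Finset.mem_univ _)
    have := hpos ⟨0, hr⟩
    omega
  -- weak sufficiency
  have weak : ∀ (h1 : 2 * nn ⟨0, hr⟩ ≤ n + 2) (a : (k : Fin r) → Fin (nn k / 2) → ℝ),
      2 * (∑ k, rhoSO (nn k) (a k)) ≤
        rhoSO n (Sum.elim (fun x : Σ k : Fin r, Fin (nn k / 2) => a x.1 x.2)
          (fun _ : Fin (n / 2 - ∑ k, nn k / 2) => (0 : ℝ))) := by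
    intro h1 a
    rw [← sub_nonneg, bridge nn n a]
    refine Ffun_nonneg _ _ (fun S => ?_) _ (fun i => abs_nonneg _)
    have := perS hr nn hmono hn 0 (by norm_num) (by omega) S
    simpa using this
  -- counterexample evaluation
  have singl : ∀ (hm : 1 ≤ nn ⟨0, hr⟩ / 2),
      Ffun (fun i j : (k : Fin r) × Fin (nn k / 2) => if i.1 = j.1 then (-1:ℝ) else 1)
        (fun i : (k : Fin r) × Fin (nn k / 2) =>
          2 * ((n / 2 - ∑ k, nn k / 2 : ℕ) : ℝ) - (if Even n then 1 else 0)
          + (if Even (nn i.1) then 2 else 0))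
        (fun i => if i ∈ ({⟨⟨0, hr⟩, ⟨0, hm⟩⟩} : Finset ((k : Fin r) × Fin (nn k / 2)))
          then (1:ℝ) else 0)
      = ((n : ℝ) - 2) - 2 * ((nn ⟨0, hr⟩ : ℝ) - 2) := by
    intro hm
    rw [evalS nn n hn]
    set s0 : (k : Fin r) × Fin (nn k / 2) := ⟨⟨0, hr⟩, ⟨0, hm⟩⟩ with hs0
    have hcard : ({s0} : Finset ((k : Fin r) × Fin (nn k / 2))).card = 1 :=
      Finset.card_singleton _
    have hterm : ∀ k : Fin r,
        ((({s0} : Finset ((k : Fin r) × Fin (nn k / 2))).filter fun i => i.1 = k).card : ℝ)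
          * ((nn k : ℝ) - (({s0} : Finset ((k : Fin r) × Fin (nn k / 2))).filter
              fun i => i.1 = k).card - 1)
        = if (⟨0, hr⟩ : Fin r) = k then (nn k : ℝ) - 2 else 0 := by
      intro k
      rw [Finset.filter_singleton]
      rcases eq_or_ne (s0.1) k with h | h
      · rw [if_pos h, if_pos (by exact h)]
        rw [Finset.card_singleton]
        push_cast
        ring
      · rw [if_neg h, if_neg (by exact h)]
        simp
    rw [Finset.sum_congr rfl fun k _ => hterm k, Finset.sum_ite_eq, if_pos (Finset.mem_univ _),
      hcard]
    push_cast
    ring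
  constructor
  · constructor
    · intro h
      by_cases hm : 1 ≤ nn ⟨0, hr⟩ / 2
      · set a : (k : Fin r) → Fin (nn k / 2) → ℝ := fun k i =>
          if (⟨k, i⟩ : (k : Fin r) × Fin (nn k / 2)) ∈
            ({⟨⟨0, hr⟩, ⟨0, hm⟩⟩} : Finset ((k : Fin r) × Fin (nn k / 2))) then 1 else 0
          with ha
        have h2 := h a
        rw [← sub_nonneg, bridge nn n a] at h2
        have hxeq : (fun i : (k : Fin r) × Fin (nn k / 2) => |a i.1 i.2|)
            = (fun i => if i ∈ ({⟨⟨0, hr⟩, ⟨0, hm⟩⟩} :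
                Finset ((k : Fin r) × Fin (nn k / 2))) then (1:ℝ) else 0) := by
          funext i
          simp only [ha]
          rw [Sigma.eta]
          split_ifs <;> norm_num
        rw [hxeq, singl hm] at h2
        have : 2 * (nn ⟨0, hr⟩ : ℝ) ≤ (n : ℝ) + 2 := by linarith
        exact_mod_cast this
      · have := hpos ⟨0, hr⟩
        omega
    · intro h1 a
      exact weak h1 a
  · constructor
    · intro h
      by_cases hm : 1 ≤ nn ⟨0, hr⟩ / 2
      · set a : (k : Fin r) → Fin (nn k / 2) → ℝ := fun k i =>
          if (⟨k, i⟩ : (k : Fin r) × Fin (nn k / 2)) ∈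
            ({⟨⟨0, hr⟩, ⟨0, hm⟩⟩} : Finset ((k : Fin r) × Fin (nn k / 2))) then 1 else 0
          with ha
        have hane : a ≠ 0 := by
          intro h0
          have h3 := congrFun (congrFun h0 ⟨0, hr⟩) ⟨0, hm⟩
          simp only [ha, Pi.zero_apply] at h3
          rw [if_pos (Finset.mem_singleton_self _)] at h3
          norm_num at h3
        have h2 := h a hane
        rw [← sub_pos, bridge nn n a] at h2
        have hxeq : (fun i : (k : Fin r) × Fin (nn k / 2) => |a i.1 i.2|)
            = (fun i => if i ∈ ({⟨⟨0, hr⟩, ⟨0, hm⟩⟩} :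
                Finset ((k : Fin r) × Fin (nn k / 2))) then (1:ℝ) else 0) := by
          funext i
          simp only [ha]
          rw [Sigma.eta]
          split_ifs <;> norm_num
        rw [hxeq, singl hm] at h2
        have h4 : 2 * (nn ⟨0, hr⟩ : ℝ) < (n : ℝ) + 2 := by linarith
        have h5 : 2 * nn ⟨0, hr⟩ < n + 2 := by exact_mod_cast h4
        omega
      · have := hpos ⟨0, hr⟩
        omega
    · intro h1 a hane
      rw [← sub_pos, bridge nn n a]
      refine Ffun_pos _ _ (fun S => ?_) (fun S hSne => ?_) _ (fun i => abs_nonneg _) ?_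
      · have := perS hr nn hmono hn 0 (by norm_num) (by omega) S
        simpa using this
      · have := perS hr nn hmono hn 1 le_rfl (by omega) S
        have hc1 : 1 ≤ S.card := Finset.card_pos.mpr hSne
        rw [if_pos hc1] at this
        linarith
      · obtain ⟨k, hk⟩ := Function.ne_iff.mp hane
        obtain ⟨i, hi⟩ := Function.ne_iff.mp hk
        exact ⟨⟨k, i⟩, by simpa [abs_ne_zero] using hi⟩
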